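/- Let ρ, T_⊥, T_z > 0 and let f(v) = ρ (2π)^{−3/2} (T_⊥² T_z)^{−1/2} exp(−(v_x² + v_y²)/(2T_⊥) − v_z²/(2T_z)) be the anisotropic Gaussian on ℝ³. Then ∫_{ℝ³} ∫_{ℝ³} f(v) f(v_*) v_z q_z q_⊥² dv_* dv = 4 ρ² T_⊥ T_z, where q = v − v_*, q_z is its third component, and q_⊥² = q_x² + q_y². -/

import Mathlib

/-! The anisotropic Gaussian is `ρ` times a product of three centred one-dimensional Gaussian
densities, of variances `T⊥`, `T⊥`, `T_z`, so by Fubini its integral against any product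
`p (v 0) * q (v 1) * r (v 2)` is `ρ` times a product of three Gaussian expectations.
Integrating first in `w`, `E[(a - X)²] = a² + T` and `E[a - X] = a` turn the inner integral into
`ρ v_z (v_x² + v_y² + 2 T⊥)`; the outer integral then only needs `E[X²] = T`. -/

open MeasureTheory

/-- The anisotropic Gaussian with density `ρ`, transverse temperature `T⊥` and longitudinal
temperature `T_z`. -/
noncomputable def anisoGauss (ρ Tp Tz : ℝ) (v : EuclideanSpace ℝ (Fin 3)) : ℝ :=
  ρ * (2 * Real.pi) ^ (-(3 : ℝ) / 2) * (Tp ^ 2 * Tz) ^ (-(1 : ℝ) / 2) *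
    Real.exp (-((v 0) ^ 2 + (v 1) ^ 2) / (2 * Tp) - (v 2) ^ 2 / (2 * Tz))

open ProbabilityTheory Real
open scoped NNReal

section Fubini
variable {ι 𝕜 : Type*} [Fintype ι] [RCLike 𝕜]

theorem integral_euclideanSpace_prod (f : ι → ℝ → 𝕜) :
    ∫ v : EuclideanSpace ℝ ι, ∏ i, f i (v i) = ∏ i, ∫ x, f i x := by
  rw [← (PiLp.volume_preserving_toLp ι).integral_comp
    (MeasurableEquiv.toLp 2 _).measurableEmbedding]
  exact integral_fintype_prod_volume_eq_prod f

theorem integrable_euclideanSpace_prod {f : ι → ℝ → 𝕜} (hf : ∀ i, Integrable (f i)) :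
    Integrable fun v : EuclideanSpace ℝ ι => ∏ i, f i (v i) := by
  rw [← (PiLp.volume_preserving_toLp ι).integrable_comp_emb
    (MeasurableEquiv.toLp 2 _).measurableEmbedding]
  exact Integrable.fintype_prod hf

end Fubini

section GaussianMoments
variable (μ : ℝ) (v : ℝ≥0)

lemma integral_sq_gaussianReal : ∫ x, x ^ 2 ∂gaussianReal μ v = μ ^ 2 + v := by
  have h := variance_eq_sub (memLp_id_gaussianReal (μ := μ) (v := v) 2)
  simp only [variance_id_gaussianReal, id_eq, Pi.pow_apply, integral_id_gaussianReal] at h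
  linarith

lemma integral_const_sub_gaussianReal (a : ℝ) : ∫ x, (a - x) ∂gaussianReal μ v = a - μ := by
  rw [← integral_map (φ := (a - ·)) (f := fun x => x) (by fun_prop) (by fun_prop),
    gaussianReal_map_const_sub, integral_id_gaussianReal]

lemma integral_const_sub_sq_gaussianReal (a : ℝ) :
    ∫ x, (a - x) ^ 2 ∂gaussianReal μ v = (a - μ) ^ 2 + v := by
  rw [← integral_map (φ := (a - ·)) (f := (· ^ 2)) (by fun_prop) (by fun_prop),
    gaussianReal_map_const_sub, integral_sq_gaussianReal]

lemma integrable_sq_gaussianReal : Integrable (fun x => x ^ 2) (gaussianReal μ v) :=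
  (memLp_id_gaussianReal 2).integrable_sq

lemma integrable_const_sub_gaussianReal (a : ℝ) :
    Integrable (fun x => a - x) (gaussianReal μ v) :=
  (integrable_const a).sub ((memLp_id_gaussianReal 1).integrable le_rfl)

lemma integrable_const_sub_sq_gaussianReal (a : ℝ) :
    Integrable (fun x => (a - x) ^ 2) (gaussianReal μ v) :=
  ((memLp_const a).sub (memLp_id_gaussianReal 2)).integrable_sq

variable {μ v}

lemma integral_gaussianPDFReal_mul (hv : v ≠ 0) (f : ℝ → ℝ) :
    ∫ x, gaussianPDFReal μ v x * f x = ∫ x, f x ∂gaussianReal μ v :=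
  (integral_gaussianReal_eq_integral_smul hv).symm

lemma integrable_gaussianPDFReal_mul_iff (hv : v ≠ 0) {f : ℝ → ℝ} :
    Integrable (fun x => gaussianPDFReal μ v x * f x) ↔ Integrable f (gaussianReal μ v) := by
  rw [gaussianReal_of_var_ne_zero _ hv, integrable_withDensity_iff_integrable_smul'
    (measurable_gaussianPDF μ v) (ae_of_all _ fun _ => gaussianPDF_lt_top)]
  simp only [toReal_gaussianPDF, smul_eq_mul]

end GaussianMoments

lemma two_pi_rpow_mul_rpow_eq_prod_inv_sqrt {Tp Tz : ℝ} (hTp : 0 ≤ Tp) (hTz : 0 ≤ Tz) :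
    (2 * π) ^ (-(3 : ℝ) / 2) * (Tp ^ 2 * Tz) ^ (-(1 : ℝ) / 2) =
      (√(2 * π * Tp))⁻¹ * (√(2 * π * Tp))⁻¹ * (√(2 * π * Tz))⁻¹ := by
  have h2π : 0 ≤ 2 * π := by positivity
  rw [← mul_inv, ← mul_inv, ← sqrt_mul (by positivity), ← sqrt_mul (by positivity),
    show (-(3 : ℝ) / 2) = (3 : ℕ) * (-(1 / 2)) by norm_num, rpow_mul h2π, Real.rpow_natCast,
    show (-(1 : ℝ) / 2) = -(1 / 2) by norm_num, ← mul_rpow (by positivity) (by positivity),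
    rpow_neg (by positivity), ← sqrt_eq_rpow]
  ring_nf

lemma anisoGauss_eq_mul_gaussianPDFReal (ρ : ℝ) {Tp Tz : ℝ} (hTp : 0 < Tp) (hTz : 0 < Tz)
    (v : EuclideanSpace ℝ (Fin 3)) :
    anisoGauss ρ Tp Tz v = ρ * (gaussianPDFReal 0 Tp.toNNReal (v 0) *
      gaussianPDFReal 0 Tp.toNNReal (v 1) * gaussianPDFReal 0 Tz.toNNReal (v 2)) := by
  rw [anisoGauss, mul_assoc ρ, mul_assoc ρ,
    two_pi_rpow_mul_rpow_eq_prod_inv_sqrt hTp.le hTz.le,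
    show -(v 0 ^ 2 + v 1 ^ 2) / (2 * Tp) - v 2 ^ 2 / (2 * Tz) =
      -v 0 ^ 2 / (2 * Tp) + -v 1 ^ 2 / (2 * Tp) + -v 2 ^ 2 / (2 * Tz) by ring, exp_add, exp_add]
  simp only [gaussianPDFReal, coe_toNNReal _ hTp.le, coe_toNNReal _ hTz.le, sub_zero]
  ring

section AnisoGauss
variable {ρ Tp Tz : ℝ}

lemma anisoGauss_mul_eq_mul_prod (hTp : 0 < Tp) (hTz : 0 < Tz) (p q r : ℝ → ℝ)
    (v : EuclideanSpace ℝ (Fin 3)) :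
    anisoGauss ρ Tp Tz v * (p (v 0) * q (v 1) * r (v 2)) =
      ρ * ∏ i, ![fun x => gaussianPDFReal 0 Tp.toNNReal x * p x,
        fun x => gaussianPDFReal 0 Tp.toNNReal x * q x,
        fun x => gaussianPDFReal 0 Tz.toNNReal x * r x] i (v i) := by
  simp only [anisoGauss_eq_mul_gaussianPDFReal ρ hTp hTz, Fin.prod_univ_three,
    Matrix.cons_val_zero, Matrix.cons_val_one, Matrix.cons_val_two, Matrix.head_cons,
    Matrix.tail_cons]
  ring

lemma integral_anisoGauss_mul_prod (hTp : 0 < Tp) (hTz : 0 < Tz) (p q r : ℝ → ℝ) :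
    ∫ v, anisoGauss ρ Tp Tz v * (p (v 0) * q (v 1) * r (v 2)) =
      ρ * ((∫ x, p x ∂gaussianReal 0 Tp.toNNReal) *
        (∫ x, q x ∂gaussianReal 0 Tp.toNNReal) * ∫ x, r x ∂gaussianReal 0 Tz.toNNReal) := by
  simp_rw [anisoGauss_mul_eq_mul_prod hTp hTz]
  rw [integral_const_mul, integral_euclideanSpace_prod]
  simp only [Fin.prod_univ_three, Matrix.cons_val_zero, Matrix.cons_val_one, Matrix.cons_val_two,
    Matrix.head_cons, Matrix.tail_cons, integral_gaussianPDFReal_mul (toNNReal_pos.2 hTp).ne',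
    integral_gaussianPDFReal_mul (toNNReal_pos.2 hTz).ne']

lemma integrable_anisoGauss_mul_prod (hTp : 0 < Tp) (hTz : 0 < Tz) {p q r : ℝ → ℝ}
    (hp : Integrable p (gaussianReal 0 Tp.toNNReal))
    (hq : Integrable q (gaussianReal 0 Tp.toNNReal))
    (hr : Integrable r (gaussianReal 0 Tz.toNNReal)) :
    Integrable fun v => anisoGauss ρ Tp Tz v * (p (v 0) * q (v 1) * r (v 2)) := by
  simp only [anisoGauss_mul_eq_mul_prod hTp hTz]
  refine (integrable_euclideanSpace_prod fun i => ?_).const_mul ρ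
  fin_cases i
  · simpa [integrable_gaussianPDFReal_mul_iff (toNNReal_pos.2 hTp).ne'] using hp
  · simpa [integrable_gaussianPDFReal_mul_iff (toNNReal_pos.2 hTp).ne'] using hq
  · simpa [integrable_gaussianPDFReal_mul_iff (toNNReal_pos.2 hTz).ne'] using hr

lemma integral_anisoGauss_mul_qz_mul_qperp_sq (hTp : 0 < Tp) (hTz : 0 < Tz)
    (a : EuclideanSpace ℝ (Fin 3)) :
    ∫ w, anisoGauss ρ Tp Tz w * ((a 2 - w 2) * ((a 0 - w 0) ^ 2 + (a 1 - w 1) ^ 2)) =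
      ρ * (a 2 * (a 0 ^ 2 + a 1 ^ 2 + 2 * Tp)) := by
  have hx := integrable_anisoGauss_mul_prod (ρ := ρ) hTp hTz
    (integrable_const_sub_sq_gaussianReal _ _ (a 0)) (integrable_const 1)
    (integrable_const_sub_gaussianReal _ _ (a 2))
  have hy := integrable_anisoGauss_mul_prod (ρ := ρ) hTp hTz (integrable_const 1)
    (integrable_const_sub_sq_gaussianReal _ _ (a 1))
    (integrable_const_sub_gaussianReal _ _ (a 2))
  calc _ = ∫ w, (anisoGauss ρ Tp Tz w * ((a 0 - w 0) ^ 2 * 1 * (a 2 - w 2)) +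
        anisoGauss ρ Tp Tz w * (1 * (a 1 - w 1) ^ 2 * (a 2 - w 2))) := by
        congr 1 with w; ring
    _ = _ := by
      rw [integral_add hx hy,
        integral_anisoGauss_mul_prod hTp hTz (fun x => (a 0 - x) ^ 2) (fun _ => 1) (a 2 - ·),
        integral_anisoGauss_mul_prod hTp hTz (fun _ => 1) (fun x => (a 1 - x) ^ 2) (a 2 - ·)]
      simp only [integral_const_sub_sq_gaussianReal, integral_const_sub_gaussianReal,
        integral_const, probReal_univ, smul_eq_mul, coe_toNNReal _ hTp.le]
      ring

lemma integral_anisoGauss_mul_vz_sq_mul_vperp_sq_add (hTp : 0 < Tp) (hTz : 0 < Tz) :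
    ∫ v, anisoGauss ρ Tp Tz v * (v 2 ^ 2 * (v 0 ^ 2 + v 1 ^ 2 + 2 * Tp)) = 4 * ρ * Tp * Tz := by
  have hx := integrable_anisoGauss_mul_prod (ρ := ρ) hTp hTz
    (integrable_sq_gaussianReal _ _) (integrable_const 1) (integrable_sq_gaussianReal _ _)
  have hy := integrable_anisoGauss_mul_prod (ρ := ρ) hTp hTz
    (integrable_const 1) (integrable_sq_gaussianReal _ _) (integrable_sq_gaussianReal _ _)
  have hz := integrable_anisoGauss_mul_prod (ρ := ρ) hTp hTz
    (integrable_const 1) (integrable_const 1) (integrable_sq_gaussianReal _ _)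
  calc _ = ∫ v, (anisoGauss ρ Tp Tz v * (v 0 ^ 2 * 1 * v 2 ^ 2) +
        anisoGauss ρ Tp Tz v * (1 * v 1 ^ 2 * v 2 ^ 2) +
        2 * Tp * (anisoGauss ρ Tp Tz v * (1 * 1 * v 2 ^ 2))) := by
        congr 1 with v; ring
    _ = _ := by
      rw [integral_add ?_ (hz.const_mul _), integral_add hx hy, integral_const_mul,
        integral_anisoGauss_mul_prod hTp hTz (· ^ 2) (fun _ => 1) (· ^ 2),
        integral_anisoGauss_mul_prod hTp hTz (fun _ => 1) (· ^ 2) (· ^ 2),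
        integral_anisoGauss_mul_prod hTp hTz (fun _ => 1) (fun _ => 1) (· ^ 2)]
      · simp only [integral_sq_gaussianReal, integral_const, probReal_univ, smul_eq_mul,
          coe_toNNReal _ hTp.le, coe_toNNReal _ hTz.le]
        ring
      · exact hx.add hy

end AnisoGauss

theorem anisoGauss_trubnikov_integral_general (ρ Tp Tz : ℝ) (hTp : 0 < Tp)
    (hTz : 0 < Tz) :
    (∫ v : EuclideanSpace ℝ (Fin 3), ∫ w : EuclideanSpace ℝ (Fin 3),
        anisoGauss ρ Tp Tz v * anisoGauss ρ Tp Tz w * (v 2) * ((v 2) - (w 2)) *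
          (((v 0) - (w 0)) ^ 2 + ((v 1) - (w 1)) ^ 2)) =
      4 * ρ ^ 2 * Tp * Tz := by
  calc _ = ∫ v, ρ * (anisoGauss ρ Tp Tz v * (v 2 ^ 2 * (v 0 ^ 2 + v 1 ^ 2 + 2 * Tp))) := by
        congr 1 with v
        calc _ = anisoGauss ρ Tp Tz v * v 2 * ∫ w, anisoGauss ρ Tp Tz w *
              ((v 2 - w 2) * ((v 0 - w 0) ^ 2 + (v 1 - w 1) ^ 2)) := by
              rw [← integral_const_mul]; congr 1 with w; ring
          _ = _ := by rw [integral_anisoGauss_mul_qz_mul_qperp_sq hTp hTz]; ring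
    _ = _ := by
      rw [integral_const_mul, integral_anisoGauss_mul_vz_sq_mul_vperp_sq_add hTp hTz]
      ring

/-- The key Trubnikov double integral for the anisotropic Gaussian:
`∫∫ f(v) f(v_*) v_z q_z q_⊥² dv_* dv = 4 ρ² T_⊥ T_z`. -/
theorem anisoGauss_trubnikov_integral (ρ Tp Tz : ℝ) (hρ : 0 < ρ) (hTp : 0 < Tp)
    (hTz : 0 < Tz) :
    (∫ v : EuclideanSpace ℝ (Fin 3), ∫ w : EuclideanSpace ℝ (Fin 3),
        anisoGauss ρ Tp Tz v * anisoGauss ρ Tp Tz w * (v 2) * ((v 2) - (w 2)) *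
          (((v 0) - (w 0)) ^ 2 + ((v 1) - (w 1)) ^ 2)) =
      4 * ρ ^ 2 * Tp * Tz :=
  anisoGauss_trubnikov_integral_general ρ Tp Tz hTp hTz
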